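/- Under the unilateral approximation assumptions, if additionally Z_{TT} = Z_0·I, Z_{RR} = Z_0·I, and Z_{II,ℓ} = Z_0·I for all ℓ, and if the direct and skip links are fully blocked (Z_{RT} = 0, Z_{IT,ℓ} = 0 for ℓ ≥ 2, Z_{RI,ℓ} = 0 for ℓ ≤ L−1), then the channel H = Z_0(Z_0 I + Z_{RR})^{-1}(Z_{RT} − Z_{RI}(Z_I + Z_{II})^{-1} Z_{IT}) Z_{TT}^{-1} equals H_{RI,L}(Θ_L − I) ∏_{ℓ=L-1}^{1}(H_{ℓ+1,ℓ}(Θ_ℓ − I)) H_{IT,1}, where Θ_ℓ = (Z_{I,ℓ} + Z_0 I)^{-1}(Z_{I,ℓ} − Z_0 I), H_{RI,L} = Z_{RI,L}/(2Z_0), H_{IT,1} = Z_{IT,1}/(2Z_0), and H_{ℓ+1,ℓ} = Z_{ℓ+1,ℓ}/(2Z_0). -/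
import Mathlib


open Matrix

section MultiRIS

variable (L NI NT NR : ℕ)

/-- Block diagonal matrix `Z_I = diag(Z_{I,1},…,Z_{I,L})` of the RIS
reconfigurable impedance matrices (`ZI ℓ` is `Z_{I,ℓ}`, 1-indexed). -/
noncomputable def ZIblock (ZI : ℕ → Matrix (Fin NI) (Fin NI) ℂ) :
    Matrix (Fin L × Fin NI) (Fin L × Fin NI) ℂ :=
  fun p q => if (p.1 : ℕ) = (q.1 : ℕ) then ZI ((p.1 : ℕ) + 1) p.2 q.2 else 0

/-- Block lower bidiagonal inter-RIS impedance matrix `Z_{II}` with diagonal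
blocks `Z_{II,ℓ} = Z₀ I` and subdiagonal blocks `Z_{ℓ+1,ℓ}` (given by `Zc ℓ`
for `ℓ = 1,…,L−1`); all other blocks vanish (unilateral approximation and
obstructed non-adjacent RIS links). -/
noncomputable def ZIIblock (Z0 : ℝ) (Zc : ℕ → Matrix (Fin NI) (Fin NI) ℂ) :
    Matrix (Fin L × Fin NI) (Fin L × Fin NI) ℂ :=
  fun p q =>
    if (p.1 : ℕ) = (q.1 : ℕ) then (if p.2 = q.2 then (Z0 : ℂ) else 0)
    else if (p.1 : ℕ) = (q.1 : ℕ) + 1 then Zc ((q.1 : ℕ) + 1) p.2 q.2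
    else 0

/-- `Z_{RI} = [Z_{RI,1},…,Z_{RI,L}]` with `Z_{RI,ℓ} = 0` for `ℓ ≤ L−1` and the
only nonzero block `Z_{RI,L}` = `ZRIL`. -/
noncomputable def ZRIblock (ZRIL : Matrix (Fin NR) (Fin NI) ℂ) :
    Matrix (Fin NR) (Fin L × Fin NI) ℂ :=
  fun r q => if (q.1 : ℕ) = L - 1 then ZRIL r q.2 else 0

/-- `Z_{IT} = [Z_{IT,1}ᵀ,…,Z_{IT,L}ᵀ]ᵀ` with `Z_{IT,ℓ} = 0` for `ℓ ≥ 2` and the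
only nonzero block `Z_{IT,1}` = `ZIT1`. -/
noncomputable def ZITblock (ZIT1 : Matrix (Fin NI) (Fin NT) ℂ) :
    Matrix (Fin L × Fin NI) (Fin NT) ℂ :=
  fun p t => if (p.1 : ℕ) = 0 then ZIT1 p.2 t else 0

end MultiRIS

section Aux

variable {NI : ℕ}

/-- Candidate inverse blocks of the block lower bidiagonal matrix with diagonal
inverse blocks `Dm` and subdiagonal blocks `Cm`. -/
noncomputable def Pblk (Dm Cm : ℕ → Matrix (Fin NI) (Fin NI) ℂ) :
    ℕ → ℕ → Matrix (Fin NI) (Fin NI) ℂ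
  | 0, j => if j = 0 then Dm 0 else 0
  | (i+1), j => if j = i + 1 then Dm (i+1) else -(Dm (i+1) * Cm (i+1) * Pblk Dm Cm i j)

lemma Pblk_diag (Dm Cm : ℕ → Matrix (Fin NI) (Fin NI) ℂ) (i : ℕ) :
    Pblk Dm Cm i i = Dm i := by
  cases i <;> simp [Pblk]

lemma Pblk_eq_zero (Dm Cm : ℕ → Matrix (Fin NI) (Fin NI) ℂ) :
    ∀ i j, i < j → Pblk Dm Cm i j = 0 := by
  intro i
  induction i with
  | zero =>
    intro j hj
    simp only [Pblk, if_neg (by omega : j ≠ 0)]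
  | succ i ih =>
    intro j hj
    simp only [Pblk, if_neg (by omega : j ≠ i + 1), ih j (by omega), mul_zero, neg_zero]

lemma Pblk_col (Dm Cm : ℕ → Matrix (Fin NI) (Fin NI) ℂ) :
    ∀ i j, j < i → Pblk Dm Cm i j = -(Pblk Dm Cm i (j+1) * (Cm (j+1) * Dm j)) := by
  intro i
  induction i with
  | zero => intro j hj; omega
  | succ i ih =>
    intro j hj
    by_cases h : j = i
    · subst h
      simp only [Pblk, if_pos rfl, if_neg (by omega : j ≠ j + 1)]
      simp [Pblk_diag, mul_assoc]
    · have hj' : j < i := by omega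
      simp only [Pblk, if_neg (by omega : j ≠ i + 1), if_neg (by omega : j + 1 ≠ i + 1)]
      rw [ih j hj']
      simp [mul_assoc]

/-- Matrix assembled from blocks. -/
noncomputable def blkMat (L NI : ℕ) (f : ℕ → ℕ → Matrix (Fin NI) (Fin NI) ℂ) :
    Matrix (Fin L × Fin NI) (Fin L × Fin NI) ℂ :=
  Matrix.of fun p q => f p.1 q.1 p.2 q.2

lemma blkMat_mul (L NI : ℕ) (f g : ℕ → ℕ → Matrix (Fin NI) (Fin NI) ℂ) :
    blkMat L NI f * blkMat L NI g =
      blkMat L NI (fun a b => ∑ r : Fin L, f a r.1 * g r.1 b) := by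
  ext ⟨p, x⟩ ⟨q, y⟩
  simp [blkMat, Matrix.mul_apply, Fintype.sum_prod_type, Matrix.sum_apply]

/-- Block description of the bidiagonal matrix `Z_I + Z_{II}`. -/
noncomputable def AblkN (Z0 : ℝ) (ZI Zc : ℕ → Matrix (Fin NI) (Fin NI) ℂ) (p q : ℕ) :
    Matrix (Fin NI) (Fin NI) ℂ :=
  if p = q then ZI (p+1) + (Z0 : ℂ) • 1 else if p = q + 1 then Zc (q+1) else 0

end Aux

/-- Physics-compliant multi-RIS channel: with perfect matching and no mutual
coupling (`Z_{TT} = Z_{RR} = Z₀ I`, `Z_{II,ℓ} = Z₀ I`), fully blocked direct and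
skip links (`Z_{RT} = 0`, `Z_{IT,ℓ} = 0` for `ℓ ≥ 2`, `Z_{RI,ℓ} = 0` for
`ℓ ≤ L−1`), the channel
`H = Z₀ (Z₀I + Z_{RR})⁻¹ (Z_{RT} − Z_{RI} (Z_I + Z_{II})⁻¹ Z_{IT}) Z_{TT}⁻¹`
equals `H_{RI,L} (Θ_L − I) ∏_{ℓ=L−1}^{1} (H_{ℓ+1,ℓ} (Θ_ℓ − I)) H_{IT,1}`, where
`Θ_ℓ = (Z_{I,ℓ} + Z₀I)⁻¹ (Z_{I,ℓ} − Z₀I)`, `H_{RI,L} = Z_{RI,L}/(2Z₀)`,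
`H_{IT,1} = Z_{IT,1}/(2Z₀)`, `H_{ℓ+1,ℓ} = Z_{ℓ+1,ℓ}/(2Z₀)`. -/
theorem multiRIS_physics_compliant_channel (L NI NT NR : ℕ) (hL : 1 ≤ L)
    (Z0 : ℝ) (hZ0 : 0 < Z0)
    (ZI : ℕ → Matrix (Fin NI) (Fin NI) ℂ)
    (hZI : ∀ ℓ, 1 ≤ ℓ → ℓ ≤ L →
      IsUnit (ZI ℓ + (Z0 : ℂ) • (1 : Matrix (Fin NI) (Fin NI) ℂ)))
    (Zc : ℕ → Matrix (Fin NI) (Fin NI) ℂ)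
    (ZRIL : Matrix (Fin NR) (Fin NI) ℂ) (ZIT1 : Matrix (Fin NI) (Fin NT) ℂ) :
    (Z0 : ℂ) • (((Z0 : ℂ) • (1 : Matrix (Fin NR) (Fin NR) ℂ) +
          (Z0 : ℂ) • (1 : Matrix (Fin NR) (Fin NR) ℂ))⁻¹ *
        ((0 : Matrix (Fin NR) (Fin NT) ℂ) -
          ZRIblock L NI NR ZRIL *
            (ZIblock L NI ZI + ZIIblock L NI Z0 Zc)⁻¹ *
            ZITblock L NI NT ZIT1) *
        ((Z0 : ℂ) • (1 : Matrix (Fin NT) (Fin NT) ℂ))⁻¹) =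
      ((2 * (Z0 : ℂ))⁻¹ • ZRIL) *
        ((ZI L + (Z0 : ℂ) • 1)⁻¹ * (ZI L - (Z0 : ℂ) • 1) - 1) *
        (((List.range (L - 1)).map (fun t =>
          ((2 * (Z0 : ℂ))⁻¹ • Zc (L - 1 - t)) *
            ((ZI (L - 1 - t) + (Z0 : ℂ) • 1)⁻¹ *
              (ZI (L - 1 - t) - (Z0 : ℂ) • 1) - 1))).prod) *
        ((2 * (Z0 : ℂ))⁻¹ • ZIT1) := by
  have hZ0C : (Z0 : ℂ) ≠ 0 := by
    exact_mod_cast hZ0.ne'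
  have h2Z0 : (2 * (Z0 : ℂ)) ≠ 0 := by
    simp [hZ0C]
  set D : ℕ → Matrix (Fin NI) (Fin NI) ℂ :=
    fun n => (ZI (n+1) + (Z0 : ℂ) • 1)⁻¹ with hD
  have hInv : ∀ n, n < L → (ZI (n+1) + (Z0 : ℂ) • 1) * D n = 1 := by
    intro n hn
    exact Matrix.mul_nonsing_inv _
      ((Matrix.isUnit_iff_isUnit_det _).mp (hZI (n+1) (by omega) (by omega)))
  -- block description of A
  have hA : ZIblock L NI ZI + ZIIblock L NI Z0 Zc = blkMat L NI (AblkN Z0 ZI Zc) := by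
    ext ⟨p, x⟩ ⟨q, y⟩
    by_cases h1 : (p : ℕ) = (q : ℕ)
    · simp [ZIblock, ZIIblock, blkMat, AblkN, h1, Matrix.one_apply, mul_ite]
    · by_cases h2 : (p : ℕ) = (q : ℕ) + 1 <;>
        simp [ZIblock, ZIIblock, blkMat, AblkN, h1, h2]
  -- key block sum
  have key : ∀ a b : Fin L,
      (∑ r : Fin L, AblkN Z0 ZI Zc ↑a ↑r * Pblk D Zc ↑r ↑b)
        = if (a : ℕ) = (b : ℕ) then 1 else 0 := by
    intro a b
    have hsplit : ∀ r : Fin L, AblkN Z0 ZI Zc ↑a ↑r * Pblk D Zc ↑r ↑b =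
        (if r = a then (ZI ((a:ℕ)+1) + (Z0 : ℂ) • 1) * Pblk D Zc ↑a ↑b else 0) +
        (if (a : ℕ) = (r : ℕ) + 1 then Zc ((r:ℕ)+1) * Pblk D Zc ↑r ↑b else 0) := by
      intro r
      by_cases h : r = a
      · subst h
        simp [AblkN, (by omega : ¬ ((r:ℕ) = (r:ℕ) + 1))]
      · have h' : ¬ ((a : ℕ) = (r : ℕ)) := fun hh => h (Fin.ext hh.symm)
        simp only [AblkN, if_neg h', if_neg h, ite_mul, zero_mul, zero_add]
    rw [Finset.sum_congr rfl (fun r _ => hsplit r), Finset.sum_add_distrib,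
      Finset.sum_ite_eq' Finset.univ a]
    simp only [Finset.mem_univ, if_true]
    rcases ha : (a : ℕ) with _ | i
    · have hz : ∀ r : Fin L,
          (if (0 : ℕ) = (r : ℕ) + 1 then Zc ((r:ℕ)+1) * Pblk D Zc ↑r ↑b else 0) = 0 :=
        fun r => if_neg (by omega)
      rw [Finset.sum_congr rfl (fun r _ => hz r), Finset.sum_const_zero, add_zero]
      by_cases hb : (b : ℕ) = 0
      · rw [hb, Pblk_diag D Zc 0, if_pos rfl]
        exact hInv 0 (by omega)
      · rw [if_neg (fun hh => hb hh.symm)]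
        simp only [Pblk, if_neg hb, mul_zero]
    · have hiL : i < L := by
        have := a.isLt; omega
      have hpL : i + 1 < L := by have := a.isLt; omega
      have hone : ∀ r : Fin L,
          (if i + 1 = (r : ℕ) + 1 then Zc ((r:ℕ)+1) * Pblk D Zc ↑r ↑b else 0) =
          (if r = (⟨i, hiL⟩ : Fin L) then Zc (i+1) * Pblk D Zc i ↑b else 0) := by
        intro r
        by_cases hr : r = (⟨i, hiL⟩ : Fin L)
        · subst hr; simp
        · have : (r : ℕ) ≠ i := fun hh => hr (Fin.ext hh)
          rw [if_neg (by omega), if_neg hr]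
      rw [Finset.sum_congr rfl (fun r _ => hone r),
        Finset.sum_ite_eq' Finset.univ (⟨i, hiL⟩ : Fin L)]
      simp only [Finset.mem_univ, if_true]
      by_cases hb : (b : ℕ) = i + 1
      · rw [hb, Pblk_diag D Zc (i+1), Pblk_eq_zero D Zc i (i+1) (by omega), mul_zero,
          add_zero, if_pos rfl]
        exact hInv (i+1) hpL
      · rw [if_neg (fun hh => hb hh.symm)]
        simp only [Pblk, if_neg hb]
        rw [mul_neg, ← mul_assoc, ← mul_assoc, hInv (i+1) hpL, one_mul]
        simp
  -- A * B = 1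
  have hABone : blkMat L NI (AblkN Z0 ZI Zc) * blkMat L NI (Pblk D Zc) = 1 := by
    rw [blkMat_mul]
    ext ⟨p, x⟩ ⟨q, y⟩
    rw [blkMat, Matrix.of_apply, key p q]
    by_cases h : (p : ℕ) = (q : ℕ)
    · have hpq : p = q := Fin.ext h
      subst hpq
      simp [Matrix.one_apply, h, Prod.ext_iff]
    · have hne : ¬ ((p, x) = (q, y)) := by
        intro hh
        exact h (congrArg (fun z : Fin L × Fin NI => ((z.1 : Fin L) : ℕ)) hh)
      simp [Matrix.one_apply, h, hne]
  have hAinv : (ZIblock L NI ZI + ZIIblock L NI Z0 Zc)⁻¹ = blkMat L NI (Pblk D Zc) := by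
    rw [hA]
    exact Matrix.inv_eq_right_inv hABone
  -- Extraction of the (L-1, 0) block
  have hpL : L - 1 < L := by omega
  have h0L : 0 < L := by omega
  have hExtract : ZRIblock L NI NR ZRIL * blkMat L NI (Pblk D Zc) * ZITblock L NI NT ZIT1
      = ZRIL * Pblk D Zc (L-1) 0 * ZIT1 := by
    ext r t
    have inner : ∀ (q : Fin L) (y : Fin NI),
        (ZRIblock L NI NR ZRIL * blkMat L NI (Pblk D Zc)) r (q, y)
          = (ZRIL * Pblk D Zc (L-1) ↑q) r y := by
      intro q y
      rw [Matrix.mul_apply, Fintype.sum_prod_type]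
      have hpt : ∀ p : Fin L,
          (∑ x : Fin NI, ZRIblock L NI NR ZRIL r (p, x) *
            blkMat L NI (Pblk D Zc) (p, x) (q, y))
          = if p = (⟨L-1, hpL⟩ : Fin L) then (ZRIL * Pblk D Zc (L-1) ↑q) r y else 0 := by
        intro p
        by_cases hp : p = (⟨L-1, hpL⟩ : Fin L)
        · subst hp
          rw [if_pos rfl, Matrix.mul_apply]
          simp [ZRIblock, blkMat]
        · have hp' : (p : ℕ) ≠ L - 1 := fun hh => hp (Fin.ext hh)
          simp [ZRIblock, blkMat, hp', hp]
      rw [Finset.sum_congr rfl (fun p _ => hpt p), Finset.sum_ite_eq' Finset.univ]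
      simp
    have outer : ∀ q : Fin L,
        (∑ y : Fin NI, (ZRIblock L NI NR ZRIL * blkMat L NI (Pblk D Zc)) r (q, y) *
          ZITblock L NI NT ZIT1 (q, y) t)
        = if q = (⟨0, h0L⟩ : Fin L) then (ZRIL * Pblk D Zc (L-1) 0 * ZIT1) r t else 0 := by
      intro q
      by_cases hq : q = (⟨0, h0L⟩ : Fin L)
      · subst hq
        rw [if_pos rfl, Matrix.mul_apply]
        refine Finset.sum_congr rfl (fun y _ => ?_)
        rw [inner]
        simp [ZITblock]
      · have hq' : (q : ℕ) ≠ 0 := fun hh => hq (Fin.ext hh)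
        rw [if_neg hq]
        refine Finset.sum_eq_zero (fun y _ => ?_)
        simp [ZITblock, hq']
    rw [Matrix.mul_apply, Fintype.sum_prod_type,
      Finset.sum_congr rfl (fun q _ => outer q), Finset.sum_ite_eq' Finset.univ]
    simp
  -- diagonal resistive inverses
  have hRR : (((Z0 : ℂ) • (1 : Matrix (Fin NR) (Fin NR) ℂ)) +
      (Z0 : ℂ) • (1 : Matrix (Fin NR) (Fin NR) ℂ))⁻¹ = (2 * (Z0 : ℂ))⁻¹ • 1 := by
    have h1 : ((Z0 : ℂ) • (1 : Matrix (Fin NR) (Fin NR) ℂ)) + (Z0 : ℂ) • 1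
        = (2 * (Z0 : ℂ)) • 1 := by
      rw [← add_smul]; ring_nf
    rw [h1]
    apply Matrix.inv_eq_right_inv
    rw [smul_mul_assoc, one_mul, smul_smul, mul_inv_cancel₀ h2Z0, one_smul]
  have hTT : ((Z0 : ℂ) • (1 : Matrix (Fin NT) (Fin NT) ℂ))⁻¹ = (Z0 : ℂ)⁻¹ • 1 := by
    apply Matrix.inv_eq_right_inv
    rw [smul_mul_assoc, one_mul, smul_smul, mul_inv_cancel₀ hZ0C, one_smul]
  -- theta identity
  have hTheta : ∀ ℓ, 1 ≤ ℓ → ℓ ≤ L →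
      (ZI ℓ + (Z0 : ℂ) • 1)⁻¹ * (ZI ℓ - (Z0 : ℂ) • 1) - 1
        = (-(2 * (Z0 : ℂ))) • (ZI ℓ + (Z0 : ℂ) • 1)⁻¹ := by
    intro ℓ h1 h2
    have hmul : (ZI ℓ + (Z0 : ℂ) • 1)⁻¹ * (ZI ℓ + (Z0 : ℂ) • 1) = 1 :=
      Matrix.nonsing_inv_mul _
        ((Matrix.isUnit_iff_isUnit_det _).mp (hZI ℓ h1 h2))
    calc (ZI ℓ + (Z0 : ℂ) • 1)⁻¹ * (ZI ℓ - (Z0 : ℂ) • 1) - 1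
        = (ZI ℓ + (Z0 : ℂ) • 1)⁻¹ * (ZI ℓ - (Z0 : ℂ) • 1)
            - (ZI ℓ + (Z0 : ℂ) • 1)⁻¹ * (ZI ℓ + (Z0 : ℂ) • 1) := by rw [hmul]
      _ = (ZI ℓ + (Z0 : ℂ) • 1)⁻¹ * ((ZI ℓ - (Z0 : ℂ) • 1) - (ZI ℓ + (Z0 : ℂ) • 1)) :=
            (mul_sub _ _ _).symm
      _ = (ZI ℓ + (Z0 : ℂ) • 1)⁻¹ * ((-(2 * (Z0 : ℂ))) • 1) := by
            congr 1
            module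
      _ = (-(2 * (Z0 : ℂ))) • (ZI ℓ + (Z0 : ℂ) • 1)⁻¹ := by
            rw [mul_smul_comm, mul_one]
  have hDL : D (L - 1) = (ZI L + (Z0 : ℂ) • 1)⁻¹ := by
    have e : (L - 1) + 1 = L := by omega
    simp only [hD]
    rw [e]
  -- product identity
  have hProd : ∀ k, k ≤ L - 1 →
      ((ZI L + (Z0 : ℂ) • 1)⁻¹ * (ZI L - (Z0 : ℂ) • 1) - 1) *
        (((List.range k).map (fun t =>
          ((2 * (Z0 : ℂ))⁻¹ • Zc (L - 1 - t)) *
            ((ZI (L - 1 - t) + (Z0 : ℂ) • 1)⁻¹ *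
              (ZI (L - 1 - t) - (Z0 : ℂ) • 1) - 1))).prod)
      = (-(2 * (Z0 : ℂ))) • Pblk D Zc (L-1) (L-1-k) := by
    intro k
    induction k with
    | zero =>
      intro _
      rw [List.range_zero, List.map_nil, List.prod_nil, mul_one, Nat.sub_zero,
        Pblk_diag D Zc (L-1), hDL, hTheta L (by omega) le_rfl]
    | succ k ih =>
      intro hk
      rw [List.range_succ, List.map_append, List.prod_append, List.map_cons,
        List.map_nil, List.prod_cons, List.prod_nil, mul_one, ← mul_assoc, ← mul_assoc,
        ih (by omega), hTheta (L-1-k) (by omega) (by omega)]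
      have e1 : L - 1 - (k+1) = L - 2 - k := by omega
      have e2 : (L - 2 - k) + 1 = L - 1 - k := by omega
      have hDk : (ZI (L - 1 - k) + (Z0 : ℂ) • 1)⁻¹ = D (L - 2 - k) := by
        simp only [hD]
        rw [e2]
      rw [e1, Pblk_col D Zc (L-1) (L-2-k) (by omega), e2, hDk]
      simp only [smul_mul_assoc, mul_smul_comm, smul_smul, smul_neg, mul_assoc]
      rw [← neg_smul]
      congr 1
      field_simp
  -- assemble
  have e0 : L - 1 - (L - 1) = 0 := by omega
  have hRHSgrp :
      ((2 * (Z0 : ℂ))⁻¹ • ZRIL) *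
        ((ZI L + (Z0 : ℂ) • 1)⁻¹ * (ZI L - (Z0 : ℂ) • 1) - 1) *
        (((List.range (L - 1)).map (fun t =>
          ((2 * (Z0 : ℂ))⁻¹ • Zc (L - 1 - t)) *
            ((ZI (L - 1 - t) + (Z0 : ℂ) • 1)⁻¹ *
              (ZI (L - 1 - t) - (Z0 : ℂ) • 1) - 1))).prod) *
        ((2 * (Z0 : ℂ))⁻¹ • ZIT1)
      = ((2 * (Z0 : ℂ))⁻¹ • ZRIL) * ((-(2 * (Z0 : ℂ))) • Pblk D Zc (L-1) 0) *
        ((2 * (Z0 : ℂ))⁻¹ • ZIT1) := by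
    rw [Matrix.mul_assoc ((2 * (Z0 : ℂ))⁻¹ • ZRIL)
      ((ZI L + (Z0 : ℂ) • 1)⁻¹ * (ZI L - (Z0 : ℂ) • 1) - 1)
      (((List.range (L - 1)).map (fun t =>
          ((2 * (Z0 : ℂ))⁻¹ • Zc (L - 1 - t)) *
            ((ZI (L - 1 - t) + (Z0 : ℂ) • 1)⁻¹ *
              (ZI (L - 1 - t) - (Z0 : ℂ) • 1) - 1))).prod),
      hProd (L-1) le_rfl, e0]
  rw [hAinv, hExtract, hRR, hTT, zero_sub, hRHSgrp]
  simp only [Matrix.smul_mul, Matrix.mul_smul, Matrix.mul_one, Matrix.one_mul,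
    Matrix.mul_neg, Matrix.neg_mul, smul_neg, neg_neg, smul_smul, neg_smul]
  rw [← neg_smul, ← neg_smul]
  congr 1
  field_simp
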